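/- arXiv:1406.2568 — 2 statements merged into one kernel-verified Lean document; each statement's English description precedes it below -/
import Mathlib

section
/- Let Θ = {1, ..., r} with r ≥ 2 and prior π, let (Y, 𝒜, μ) be a measure space, and for each i ∈ Θ let p(·|i) be a probability density with respect to μ. Define α = max over pairs of distinct indices i ≠ j in Θ of min(π(i), π(j)) · (1 − ‖p(·|i) − p(·|j)‖_TV). Then for every measurable estimator θ̂ : Y → Θ, Pr(θ̂(y) ≠ θ) ≥ α; that is, the protocol is α inferentially private. -/
open MeasureTheory Real Finset

/-- Inferential privacy guarantee from Le Cam's method: with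
`α = max_{i ≠ j} min(prior i, prior j) · (1 − ‖p(·|i) − p(·|j)‖_TV)`
(the maximum taken over all ordered pairs of distinct indices, i.e. over
`Finset.univ.offDiag`, which is nonempty since `r ≥ 2`), every measurable estimator
`est : Y → Fin r` has Bayesian probability of error at least `α`; that is, the AMI
protocol is `α` inferentially private. -/
theorem le_cam_inferential_privacy
    {Y : Type*} [MeasurableSpace Y] (μ : Measure Y) [SigmaFinite μ]
    (r : ℕ) (hr : 2 ≤ r)
    (prior : Fin r → ℝ) (hprior_nonneg : ∀ i, 0 ≤ prior i)
    (hprior_sum : ∑ i, prior i = 1)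
    (p : Fin r → Y → ℝ)
    (hp_meas : ∀ i, Measurable (p i))
    (hp_nonneg : ∀ i y, 0 ≤ p i y)
    (hp_int : ∀ i, Integrable (p i) μ)
    (hp_one : ∀ i, ∫ y, p i y ∂μ = 1)
    (est : Y → Fin r) (hest_meas : Measurable est) :
    ((Finset.univ : Finset (Fin r)).offDiag).sup'
        ⟨(⟨0, by omega⟩, ⟨1, by omega⟩), by
          simp only [Finset.mem_offDiag, Finset.mem_univ, true_and]
          exact fun h => absurd (congrArg Fin.val h) (by simp)⟩
        (fun ij => min (prior ij.1) (prior ij.2) *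
          (1 - (1 / 2) * ∫ y, |p ij.1 y - p ij.2 y| ∂μ))
      ≤ ∑ k, prior k * ∫ y in {y | est y ≠ k}, p k y ∂μ := by
  
  apply Finset.sup'_le
  rintro ⟨i, j⟩ hij
  simp only [Finset.mem_offDiag, Finset.mem_univ, true_and] at hij
  have hmeas : ∀ k : Fin r, MeasurableSet {y | est y ≠ k} := fun k =>
    (hest_meas (measurableSet_singleton k)).compl
  set f : Y → ℝ := fun y => min (p i y) (p j y) with hf
  have hf_eq : ∀ y, f y = (p i y + p j y - |p i y - p j y|)/2 := by
    intro y
    rcases le_total (p i y) (p j y) with h|h <;>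
      simp [hf, min_eq_left, min_eq_right, h, abs_of_nonpos, abs_of_nonneg,
        sub_nonneg, sub_nonpos] <;> ring
  have habs_int : Integrable (fun y => |p i y - p j y|) μ := ((hp_int i).sub (hp_int j)).abs
  have hf_int : Integrable f μ := by
    rw [show f = (fun y => (p i y + p j y - |p i y - p j y|)/2) from funext hf_eq]
    exact (((hp_int i).add (hp_int j)).sub habs_int).div_const 2
  have hf_integral : ∫ y, f y ∂μ = 1 - (1/2) * ∫ y, |p i y - p j y| ∂μ := by
    rw [show (fun y => f y) = (fun y => (p i y + p j y - |p i y - p j y|)/2) from funext hf_eq]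
    have hadd : Integrable (fun y => p i y + p j y) μ := (hp_int i).add (hp_int j)
    rw [integral_div, integral_sub hadd habs_int,
      integral_add (hp_int i) (hp_int j), hp_one, hp_one]
    ring
  -- key inequality
  have hkey : ∫ y, f y ∂μ ≤ (∫ y in {y | est y ≠ i}, p i y ∂μ) + ∫ y in {y | est y ≠ j}, p j y ∂μ := by
    have hsplit : (∫ y in {y | est y ≠ i}, f y ∂μ) + ∫ y in {y | est y ≠ i}ᶜ, f y ∂μ = ∫ y, f y ∂μ :=
      integral_add_compl (hmeas i) hf_int
    have h1 : ∫ y in {y | est y ≠ i}, f y ∂μ ≤ ∫ y in {y | est y ≠ i}, p i y ∂μ :=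
      setIntegral_mono_on hf_int.integrableOn (hp_int i).integrableOn (hmeas i)
        (fun y _ => min_le_left _ _)
    have hsub : {y | est y ≠ i}ᶜ ⊆ {y | est y ≠ j} := by
      intro y hy
      simp only [Set.mem_compl_iff, Set.mem_setOf_eq, not_not] at hy
      simp only [Set.mem_setOf_eq, hy]
      exact fun h => hij (h ▸ rfl)
    have h2 : ∫ y in {y | est y ≠ i}ᶜ, f y ∂μ ≤ ∫ y in {y | est y ≠ j}, p j y ∂μ := by
      calc ∫ y in {y | est y ≠ i}ᶜ, f y ∂μ ≤ ∫ y in {y | est y ≠ j}, f y ∂μ := by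
            apply setIntegral_mono_set hf_int.integrableOn
            · exact Filter.Eventually.of_forall fun y => le_min (hp_nonneg i y) (hp_nonneg j y)
            · exact Filter.Eventually.of_forall hsub
        _ ≤ ∫ y in {y | est y ≠ j}, p j y ∂μ :=
            setIntegral_mono_on hf_int.integrableOn (hp_int j).integrableOn (hmeas j)
              (fun y _ => min_le_right _ _)
    linarith
  have hint_nonneg : ∀ k : Fin r, 0 ≤ ∫ y in {y | est y ≠ k}, p k y ∂μ := fun k =>
    setIntegral_nonneg (hmeas k) (fun y _ => hp_nonneg k y)
  have hmin_nonneg : 0 ≤ min (prior i) (prior j) := le_min (hprior_nonneg i) (hprior_nonneg j)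
  have hsum : prior i * (∫ y in {y | est y ≠ i}, p i y ∂μ)
      + prior j * (∫ y in {y | est y ≠ j}, p j y ∂μ)
      ≤ ∑ k, prior k * ∫ y in {y | est y ≠ k}, p k y ∂μ := by
    calc prior i * (∫ y in {y | est y ≠ i}, p i y ∂μ)
        + prior j * (∫ y in {y | est y ≠ j}, p j y ∂μ)
        = ∑ k ∈ ({i, j} : Finset (Fin r)), prior k * ∫ y in {y | est y ≠ k}, p k y ∂μ := by
          rw [Finset.sum_pair hij]
      _ ≤ _ := Finset.sum_le_sum_of_subset_of_nonneg (Finset.subset_univ _)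
          (fun k _ _ => mul_nonneg (hprior_nonneg k) (hint_nonneg k))
  calc min (prior i) (prior j) * (1 - 1/2 * ∫ y, |p i y - p j y| ∂μ)
      = min (prior i) (prior j) * ∫ y, f y ∂μ := by rw [hf_integral]
    _ ≤ min (prior i) (prior j) *
        ((∫ y in {y | est y ≠ i}, p i y ∂μ) + ∫ y in {y | est y ≠ j}, p j y ∂μ) :=
        mul_le_mul_of_nonneg_left hkey hmin_nonneg
    _ ≤ prior i * (∫ y in {y | est y ≠ i}, p i y ∂μ)
        + prior j * (∫ y in {y | est y ≠ j}, p j y ∂μ) := by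
        rw [mul_add]
        exact add_le_add
          (mul_le_mul_of_nonneg_right (min_le_left _ _) (hint_nonneg i))
          (mul_le_mul_of_nonneg_right (min_le_right _ _) (hint_nonneg j))
    _ ≤ _ := hsum
end

section
/- (Fano-type lower bound with averaged KL divergences.) Let Θ = {1, ..., r} with r ≥ 3 and prior π, let (Y, 𝒜, μ) be a measure space, and for each i ∈ Θ let p(·|i) be a probability density with respect to μ. Then for every measurable estimator θ̂ : Y → Θ, the probability of error satisfies Pr(θ̂(y) ≠ θ) ≥ (1 / log(r − 1)) · [ log r − (1/r²) Σ_{i,j ∈ Θ} D_KL( p(·|i) ‖ p(·|j) ) − log 2 ], where D_KL(p ‖ q) = ∫_Y p(y) log( p(y)/q(y) ) μ(dy). -/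
open MeasureTheory Real Finset

/-!
Let `p̄ = (1/r) ∑ⱼ p(·|j)` be the uniform mixture. Concavity of `log` gives
`D(p(·|i) ‖ p̄) ≤ (1/r) ∑ⱼ D(p(·|i) ‖ p(·|j))` pointwise in the integrand. In the other direction,
the log-sum inequality, applied once to the events `{θ̂ = i}` and once to `{θ̂ ≠ i}`, bounds
`(1/r) ∑ᵢ D(p(·|i) ‖ p̄)` below by the binary divergence between the success probability
`1 - Pₑ` and `1/r`, which is `log r - h(Pₑ) - Pₑ log (r - 1)` with `h` the binary entropy;
and `h ≤ log 2`.
-/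

lemma mul_log_add_sub_mul_le_mul_log_div {a b c : ℝ} (ha : 0 ≤ a) (hb : 0 ≤ b) (hc : 0 < c)
    (hab : b = 0 → a = 0) : a * log c + a - c * b ≤ a * log (a / b) := by
  rcases ha.eq_or_lt with rfl | ha
  · simpa using mul_nonneg hc.le hb
  have hb : 0 < b := hb.lt_of_ne' fun h => ha.ne' (hab h)
  have key := one_sub_inv_le_log_of_pos (div_pos ha (mul_pos hc hb))
  rw [inv_div, log_div ha.ne' (mul_pos hc hb).ne', log_mul hc.ne' hb.ne'] at key
  rw [log_div ha.ne' hb.ne']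
  have := mul_le_mul_of_nonneg_left key ha.le
  rw [mul_sub, mul_one, mul_div_cancel₀ _ ha.ne'] at this
  linarith

lemma neg_le_mul_log_div {a b : ℝ} (ha : 0 ≤ a) (hb : 0 ≤ b) : -b ≤ a * log (a / b) := by
  rcases hb.eq_or_lt with rfl | hb
  · simp
  have := mul_log_add_sub_mul_le_mul_log_div ha hb.le one_pos fun h => absurd h hb.ne'
  rw [log_one] at this
  linarith

/-- For `a, b > 0`, `a * log (a / b)` is the supremum of `a * log c + a - c * b` over `c > 0`,
attained at `c = a / b`. -/
lemma mul_log_div_le_of_forall_pos {a b R : ℝ} (ha : 0 ≤ a) (hb : 0 ≤ b)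
    (h : ∀ c, 0 < c → a * log c + a - c * b ≤ R) : a * log (a / b) ≤ R := by
  rcases hb.eq_or_lt with rfl | hb
  · simpa using ha.trans (by simpa using h 1 one_pos)
  rcases ha.eq_or_lt with rfl | ha
  · rw [zero_div, log_zero, mul_zero]
    by_contra! hR
    have := h (-R / (2 * b)) (div_pos (neg_pos.2 hR) (by positivity))
    field_simp at this
    linarith
  · simpa [div_mul_cancel₀ a hb.ne'] using h (a / b) (div_pos ha hb)

lemma mul_log_div_sum_le {ι : Type*} {s : Finset ι} {w b : ι → ℝ} {a : ℝ} (ha : 0 ≤ a)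
    (hw₀ : ∀ j ∈ s, 0 ≤ w j) (hw₁ : ∑ j ∈ s, w j = 1) (hb : ∀ j ∈ s, 0 < b j) :
    a * log (a / ∑ j ∈ s, w j * b j) ≤ ∑ j ∈ s, w j * (a * log (a / b j)) := by
  rcases ha.eq_or_lt with rfl | ha
  · simp
  have hmean : 0 < ∑ j ∈ s, w j * b j := (convex_Ioi (0 : ℝ)).sum_mem hw₀ hw₁ hb
  have jensen : ∑ j ∈ s, w j * log (b j) ≤ log (∑ j ∈ s, w j * b j) :=
    strictConcaveOn_log_Ioi.concaveOn.le_map_sum hw₀ hw₁ hb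
  have hterm : ∀ j ∈ s, w j * (a * log (a / b j)) = a * log a * w j - a * (w j * log (b j)) :=
    fun j hj => by rw [log_div ha.ne' (hb j hj).ne']; ring
  calc a * log (a / ∑ j ∈ s, w j * b j) = a * log a - a * log (∑ j ∈ s, w j * b j) := by
        rw [log_div ha.ne' hmean.ne']; ring
    _ ≤ a * log a - a * ∑ j ∈ s, w j * log (b j) := by gcongr
    _ = ∑ j ∈ s, w j * (a * log (a / b j)) := by
        rw [sum_congr rfl hterm, sum_sub_distrib, ← mul_sum, ← mul_sum, hw₁, mul_one]

lemma log_sub_log_two_sub_mul_log_le {r P : ℝ} (hr : 1 < r) :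
    log r - log 2 - P * log (r - 1)
      ≤ (1 - P) * log (r * (1 - P)) + P * log (r * P / (r - 1)) := by
  have hhit : (1 - P) * log (r * (1 - P)) = (1 - P) * log r + (1 - P) * log (1 - P) := by
    rcases eq_or_ne (1 - P) 0 with h | h
    · simp [h]
    · rw [log_mul (by positivity) h]; ring
  have hmiss : P * log (r * P / (r - 1)) = P * log r + P * log P - P * log (r - 1) := by
    rcases eq_or_ne P 0 with h | h
    · simp [h]
    · rw [log_div (by positivity) (by linarith), log_mul (by positivity) h]; ring
  have hH := binEntropy_le_log_two (p := P)
  rw [binEntropy, log_inv, log_inv] at hH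
  rw [hhit, hmiss]
  linarith

section LogSum

variable {Y : Type*} [MeasurableSpace Y]

lemma integral_mul_log_add_sub_mul_le {μ : Measure Y} {f g : Y → ℝ} {c : ℝ} (hc : 0 < c)
    (hf₀ : ∀ y, 0 ≤ f y) (hg₀ : ∀ y, 0 ≤ g y) (hac : ∀ᵐ y ∂μ, g y = 0 → f y = 0)
    (hf : Integrable f μ) (hg : Integrable g μ)
    (hfg : Integrable (fun y => f y * log (f y / g y)) μ) :
    (∫ y, f y ∂μ) * log c + ∫ y, f y ∂μ - c * ∫ y, g y ∂μ
      ≤ ∫ y, f y * log (f y / g y) ∂μ := by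
  have hlin : Integrable (fun y => f y * log c + f y) μ := (hf.mul_const _).add hf
  calc (∫ y, f y ∂μ) * log c + ∫ y, f y ∂μ - c * ∫ y, g y ∂μ
      = ∫ y, (f y * log c + f y - c * g y) ∂μ := by
        rw [integral_sub hlin (hg.const_mul c), integral_add (hf.mul_const _) hf,
          integral_mul_const, integral_const_mul]
    _ ≤ ∫ y, f y * log (f y / g y) ∂μ :=
        integral_mono_ae (hlin.sub (hg.const_mul c)) hfg
          (hac.mono fun y => mul_log_add_sub_mul_le_mul_log_div (hf₀ y) (hg₀ y) hc)

theorem sum_mul_log_div_le_sum_integral {ι : Type*} [Fintype ι] {ν : ι → Measure Y}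
    {f g : ι → Y → ℝ} (hf₀ : ∀ i y, 0 ≤ f i y) (hg₀ : ∀ i y, 0 ≤ g i y)
    (hac : ∀ i, ∀ᵐ y ∂ν i, g i y = 0 → f i y = 0)
    (hf : ∀ i, Integrable (f i) (ν i)) (hg : ∀ i, Integrable (g i) (ν i))
    (hfg : ∀ i, Integrable (fun y => f i y * log (f i y / g i y)) (ν i)) :
    (∑ i, ∫ y, f i y ∂ν i) * log ((∑ i, ∫ y, f i y ∂ν i) / ∑ i, ∫ y, g i y ∂ν i)
      ≤ ∑ i, ∫ y, f i y * log (f i y / g i y) ∂ν i := by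
  refine mul_log_div_le_of_forall_pos (sum_nonneg fun i _ => integral_nonneg (hf₀ i))
    (sum_nonneg fun i _ => integral_nonneg (hg₀ i)) fun c hc => ?_
  calc (∑ i, ∫ y, f i y ∂ν i) * log c + ∑ i, ∫ y, f i y ∂ν i - c * ∑ i, ∫ y, g i y ∂ν i
      = ∑ i, ((∫ y, f i y ∂ν i) * log c + ∫ y, f i y ∂ν i - c * ∫ y, g i y ∂ν i) := by
        simp only [sum_sub_distrib, sum_add_distrib, sum_mul, mul_sum]
    _ ≤ ∑ i, ∫ y, f i y * log (f i y / g i y) ∂ν i :=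
        sum_le_sum fun i _ =>
          integral_mul_log_add_sub_mul_le hc (hf₀ i) (hg₀ i) (hac i) (hf i) (hg i) (hfg i)

theorem sum_mul_log_div_add_compl_le_sum_integral {ι : Type*} [Fintype ι] {μ : Measure Y}
    {S : ι → Set Y} (hS : ∀ i, MeasurableSet (S i)) {f g : ι → Y → ℝ}
    (hf₀ : ∀ i y, 0 ≤ f i y) (hg₀ : ∀ i y, 0 ≤ g i y)
    (hac : ∀ i, ∀ᵐ y ∂μ, g i y = 0 → f i y = 0)
    (hf : ∀ i, Integrable (f i) μ) (hg : ∀ i, Integrable (g i) μ)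
    (hfg : ∀ i, Integrable (fun y => f i y * log (f i y / g i y)) μ) :
    (∑ i, ∫ y in S i, f i y ∂μ)
        * log ((∑ i, ∫ y in S i, f i y ∂μ) / ∑ i, ∫ y in S i, g i y ∂μ)
      + (∑ i, ∫ y in (S i)ᶜ, f i y ∂μ)
        * log ((∑ i, ∫ y in (S i)ᶜ, f i y ∂μ) / ∑ i, ∫ y in (S i)ᶜ, g i y ∂μ)
      ≤ ∑ i, ∫ y, f i y * log (f i y / g i y) ∂μ := by
  have hlogsum (T : ι → Set Y) := sum_mul_log_div_le_sum_integral
    (ν := fun i => μ.restrict (T i)) hf₀ hg₀ (fun i => ae_restrict_of_ae (hac i))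
    (fun i => (hf i).restrict) (fun i => (hg i).restrict) fun i => (hfg i).restrict
  calc _ ≤ ∑ i, ∫ y in S i, f i y * log (f i y / g i y) ∂μ
        + ∑ i, ∫ y in (S i)ᶜ, f i y * log (f i y / g i y) ∂μ :=
        add_le_add (hlogsum S) (hlogsum fun i => (S i)ᶜ)
    _ = ∑ i, ∫ y, f i y * log (f i y / g i y) ∂μ := by
        rw [← sum_add_distrib]
        exact sum_congr rfl fun i _ => integral_add_compl (hS i) (hfg i)

end LogSum

section Mixture

variable {Y ι : Type*} [MeasurableSpace Y] [Fintype ι] {μ : Measure Y} {w : ι → ℝ}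
  {f : Y → ℝ} {g : ι → Y → ℝ}

lemma ae_mul_log_div_sum_le (hw₀ : ∀ j, 0 ≤ w j) (hw₁ : ∑ j, w j = 1) (hf₀ : ∀ y, 0 ≤ f y)
    (hg₀ : ∀ j y, 0 ≤ g j y) (hac : ∀ j, ∀ᵐ y ∂μ, g j y = 0 → f y = 0) :
    ∀ᵐ y ∂μ, f y * log (f y / ∑ j, w j * g j y) ≤ ∑ j, w j * (f y * log (f y / g j y)) := by
  filter_upwards [ae_all_iff.2 hac] with y hy
  rcases (hf₀ y).eq_or_lt with h | h
  · simp [← h]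
  exact mul_log_div_sum_le (hf₀ y) (fun j _ => hw₀ j) hw₁
    fun j _ => (hg₀ j y).lt_of_ne' fun h0 => h.ne' (hy j h0)

lemma integrable_mul_log_div_sum (hw₀ : ∀ j, 0 ≤ w j) (hw₁ : ∑ j, w j = 1)
    (hf₀ : ∀ y, 0 ≤ f y) (hg₀ : ∀ j y, 0 ≤ g j y) (hac : ∀ j, ∀ᵐ y ∂μ, g j y = 0 → f y = 0)
    (hf_meas : Measurable f) (hg_meas : ∀ j, Measurable (g j)) (hg : ∀ j, Integrable (g j) μ)
    (hfg : ∀ j, Integrable (fun y => f y * log (f y / g j y)) μ) :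
    Integrable (fun y => f y * log (f y / ∑ j, w j * g j y)) μ :=
  integrable_of_le_of_le (by fun_prop)
    (ae_of_all _ fun y => neg_le_mul_log_div (hf₀ y)
      (sum_nonneg fun j _ => mul_nonneg (hw₀ j) (hg₀ j y)))
    (ae_mul_log_div_sum_le hw₀ hw₁ hf₀ hg₀ hac)
    (integrable_finsetSum _ fun j _ => (hg j).const_mul (w j)).neg
    (integrable_finsetSum _ fun j _ => (hfg j).const_mul (w j))

lemma integral_mul_log_div_sum_le (hw₀ : ∀ j, 0 ≤ w j) (hw₁ : ∑ j, w j = 1)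
    (hf₀ : ∀ y, 0 ≤ f y) (hg₀ : ∀ j y, 0 ≤ g j y) (hac : ∀ j, ∀ᵐ y ∂μ, g j y = 0 → f y = 0)
    (hf_meas : Measurable f) (hg_meas : ∀ j, Measurable (g j)) (hg : ∀ j, Integrable (g j) μ)
    (hfg : ∀ j, Integrable (fun y => f y * log (f y / g j y)) μ) :
    ∫ y, f y * log (f y / ∑ j, w j * g j y) ∂μ
      ≤ ∑ j, w j * ∫ y, f y * log (f y / g j y) ∂μ := by
  calc ∫ y, f y * log (f y / ∑ j, w j * g j y) ∂μ
      ≤ ∫ y, ∑ j, w j * (f y * log (f y / g j y)) ∂μ :=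
        integral_mono_ae (integrable_mul_log_div_sum hw₀ hw₁ hf₀ hg₀ hac hf_meas hg_meas hg hfg)
          (integrable_finsetSum _ fun j _ => (hfg j).const_mul (w j))
          (ae_mul_log_div_sum_le hw₀ hw₁ hf₀ hg₀ hac)
    _ = ∑ j, w j * ∫ y, f y * log (f y / g j y) ∂μ := by
        rw [integral_finsetSum _ fun j _ => (hfg j).const_mul (w j)]
        simp only [integral_const_mul]

end Mixture

lemma sum_setIntegral_fiber {Y ι : Type*} [MeasurableSpace Y] [Fintype ι] [MeasurableSpace ι]
    [MeasurableSingletonClass ι] {μ : Measure Y} {est : Y → ι} (hest : Measurable est)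
    {f : Y → ℝ} (hf : Integrable f μ) :
    ∑ i, ∫ y in {y | est y = i}, f y ∂μ = ∫ y, f y ∂μ := by
  rw [← integral_iUnion_fintype (s := fun i => {y | est y = i})
    (fun i => hest (measurableSet_singleton i))
    (fun i j hij => Set.disjoint_left.2 fun y hi hj => hij (hi.symm.trans hj))
    fun i => hf.integrableOn, Set.iUnion_eq_univ_iff.2 fun y => ⟨est y, rfl⟩, setIntegral_univ]

theorem fano_of_reference_density {Y : Type*} [MeasurableSpace Y] {μ : Measure Y} {r : ℕ}
    (hr : 2 ≤ r) {p : Fin r → Y → ℝ} {q : Y → ℝ}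
    (hp₀ : ∀ i y, 0 ≤ p i y) (hp : ∀ i, Integrable (p i) μ) (hp_one : ∀ i, ∫ y, p i y ∂μ = 1)
    (hq₀ : ∀ y, 0 ≤ q y) (hq : Integrable q μ) (hq_one : ∫ y, q y ∂μ = 1)
    (hac : ∀ i, ∀ᵐ y ∂μ, q y = 0 → p i y = 0)
    (hpq : ∀ i, Integrable (fun y => p i y * log (p i y / q y)) μ)
    {est : Y → Fin r} (hest : Measurable est) :
    log r - log 2 - (∑ i, 1 / (r : ℝ) * ∫ y in {y | est y ≠ i}, p i y ∂μ) * log (r - 1)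
      ≤ 1 / (r : ℝ) * ∑ i, ∫ y, p i y * log (p i y / q y) ∂μ := by
  set E := ∑ i, 1 / (r : ℝ) * ∫ y in {y | est y ≠ i}, p i y ∂μ
  have hr₀ : (0 : ℝ) < r := by positivity
  have hS : ∀ i, MeasurableSet {y | est y = i} := fun i => hest (measurableSet_singleton i)
  have hcompl : ∀ i {f : Y → ℝ}, Integrable f μ →
      ∫ y in {y | est y = i}ᶜ, f y ∂μ = ∫ y, f y ∂μ - ∫ y in {y | est y = i}, f y ∂μ :=
    fun i f hf => eq_sub_of_add_eq' (integral_add_compl (hS i) hf)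
  have hmiss : ∑ i, ∫ y in {y | est y = i}ᶜ, p i y ∂μ = r * E := by
    simp only [E, mul_sum, ← mul_assoc, mul_one_div_cancel hr₀.ne', one_mul, Set.compl_ofPred,
      ne_eq]
  have hhit : ∑ i, ∫ y in {y | est y = i}, p i y ∂μ = r * (1 - E) := by
    rw [mul_sub, ← hmiss]
    simp only [hcompl _ (hp _), hp_one, sum_sub_distrib, sum_const, card_univ,
      Fintype.card_fin, nsmul_eq_mul, mul_one, sub_sub_cancel]
  have hq_eq : ∑ i, ∫ y in {y | est y = i}, q y ∂μ = 1 := by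
    rw [sum_setIntegral_fiber hest hq, hq_one]
  have hq_ne : ∑ i, ∫ y in {y | est y = i}ᶜ, q y ∂μ = r - 1 := by
    simp only [hcompl _ hq, sum_sub_distrib, hq_eq, hq_one, sum_const, card_univ,
      Fintype.card_fin, nsmul_eq_mul, mul_one]
  have hlog := sum_mul_log_div_add_compl_le_sum_integral (g := fun _ => q) hS hp₀
    (fun _ => hq₀) hac hp (fun _ => hq) hpq
  rw [hhit, hq_eq, div_one, hmiss, hq_ne] at hlog
  calc log r - log 2 - E * log (r - 1)
      ≤ (1 - E) * log (r * (1 - E)) + E * log (r * E / (r - 1)) :=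
        log_sub_log_two_sub_mul_log_le (by exact_mod_cast hr)
    _ = 1 / (r : ℝ) * (r * (1 - E) * log (r * (1 - E)) + r * E * log (r * E / (r - 1))) := by
        field_simp
    _ ≤ 1 / (r : ℝ) * ∑ i, ∫ y, p i y * log (p i y / q y) ∂μ := by gcongr

theorem fano_lower_bound_general
    {Y : Type*} [MeasurableSpace Y] (μ : Measure Y)
    (r : ℕ) (hr : 3 ≤ r)
    (p : Fin r → Y → ℝ)
    (hp_meas : ∀ i, Measurable (p i))
    (hp_nonneg : ∀ i y, 0 ≤ p i y)
    (hp_int : ∀ i, Integrable (p i) μ)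
    (hp_one : ∀ i, ∫ y, p i y ∂μ = 1)
    (hac : ∀ i j, ∀ᵐ y ∂μ, p j y = 0 → p i y = 0)
    (hkl_int : ∀ i j, Integrable (fun y => p i y * Real.log (p i y / p j y)) μ)
    (est : Y → Fin r) (hest_meas : Measurable est) :
    (1 / Real.log ((r : ℝ) - 1)) *
        (Real.log (r : ℝ)
          - (1 / (r : ℝ) ^ 2) *
              ∑ i, ∑ j, ∫ y, p i y * Real.log (p i y / p j y) ∂μ
          - Real.log 2)
      ≤ ∑ i, (1 / (r : ℝ)) * ∫ y in {y | est y ≠ i}, p i y ∂μ := by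
  set pbar : Y → ℝ := fun y => ∑ j, 1 / (r : ℝ) * p j y
  have hr₀ : (0 : ℝ) < r := by positivity
  have hr₃ : (3 : ℝ) ≤ r := by exact_mod_cast hr
  have hlog : 0 < log ((r : ℝ) - 1) := log_pos (by linarith)
  have hw₀ : ∀ _ : Fin r, (0 : ℝ) ≤ 1 / r := fun _ => by positivity
  have hw₁ : ∑ _ : Fin r, 1 / (r : ℝ) = 1 := by simp [hr₀.ne']
  have hpbar_one : ∫ y, pbar y ∂μ = 1 := by
    rw [integral_finsetSum _ fun j _ => (hp_int j).const_mul _]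
    simp only [integral_const_mul, hp_one, mul_one, hw₁]
  have hpbar_ac : ∀ i, ∀ᵐ y ∂μ, pbar y = 0 → p i y = 0 := fun i => ae_of_all _ fun y h =>
    (mul_eq_zero.1 ((sum_eq_zero_iff_of_nonneg fun j _ => mul_nonneg (hw₀ j) (hp_nonneg j y)).1
      h i (mem_univ i))).resolve_left (one_div_pos.2 hr₀).ne'
  have hfano := fano_of_reference_density (q := pbar) (by omega) hp_nonneg hp_int hp_one
    (fun y => sum_nonneg fun j _ => mul_nonneg (hw₀ j) (hp_nonneg j y))
    (integrable_finsetSum _ fun j _ => (hp_int j).const_mul _) hpbar_one hpbar_ac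
    (fun i => integrable_mul_log_div_sum hw₀ hw₁ (hp_nonneg i) hp_nonneg (hac i) (hp_meas i)
      hp_meas hp_int (hkl_int i)) hest_meas
  have hmix : 1 / (r : ℝ) * ∑ i, ∫ y, p i y * log (p i y / pbar y) ∂μ
      ≤ 1 / (r : ℝ) ^ 2 * ∑ i, ∑ j, ∫ y, p i y * log (p i y / p j y) ∂μ :=
    calc 1 / (r : ℝ) * ∑ i, ∫ y, p i y * log (p i y / pbar y) ∂μ
        ≤ 1 / (r : ℝ) * ∑ i, ∑ j, 1 / (r : ℝ) * ∫ y, p i y * log (p i y / p j y) ∂μ := by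
          gcongr with i
          exact integral_mul_log_div_sum_le hw₀ hw₁ (hp_nonneg i) hp_nonneg (hac i) (hp_meas i)
            hp_meas hp_int (hkl_int i)
      _ = 1 / (r : ℝ) ^ 2 * ∑ i, ∑ j, ∫ y, p i y * log (p i y / p j y) ∂μ := by
          simp only [← mul_sum]; ring
  rw [one_div_mul_eq_div, div_le_iff₀ hlog]
  linarith

/-- Fano-type lower bound with averaged KL divergences: with `r ≥ 3` hypotheses,
uniform prior `1/r`, and conditional densities `p i` with respect to `μ` (pairwise
absolutely continuous with integrable log-likelihood ratios, so the KL divergences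
are well defined), every measurable estimator `est : Y → Fin r` has probability of
error at least
`(1/log(r−1)) · (log r − (1/r²) ∑_{i,j} D_KL(p(·|i) ‖ p(·|j)) − log 2)`. -/
theorem fano_lower_bound
    {Y : Type*} [MeasurableSpace Y] (μ : Measure Y) [SigmaFinite μ]
    (r : ℕ) (hr : 3 ≤ r)
    (p : Fin r → Y → ℝ)
    (hp_meas : ∀ i, Measurable (p i))
    (hp_nonneg : ∀ i y, 0 ≤ p i y)
    (hp_int : ∀ i, Integrable (p i) μ)
    (hp_one : ∀ i, ∫ y, p i y ∂μ = 1)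
    (hac : ∀ i j, ∀ᵐ y ∂μ, p j y = 0 → p i y = 0)
    (hkl_int : ∀ i j, Integrable (fun y => p i y * Real.log (p i y / p j y)) μ)
    (est : Y → Fin r) (hest_meas : Measurable est) :
    (1 / Real.log ((r : ℝ) - 1)) *
        (Real.log (r : ℝ)
          - (1 / (r : ℝ) ^ 2) *
              ∑ i, ∑ j, ∫ y, p i y * Real.log (p i y / p j y) ∂μ
          - Real.log 2)
      ≤ ∑ i, (1 / (r : ℝ)) * ∫ y in {y | est y ≠ i}, p i y ∂μ :=
  fano_lower_bound_general μ r hr p hp_meas hp_nonneg hp_int hp_one hac hkl_int est hest_meas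
end
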